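/- arXiv:0704.3007 — 2 statements merged into one kernel-verified Lean document; each statement's English description precedes it below -/
import Mathlib

section
/- Let E be a formal Laurent series Σ_{j ≤ 0} a_j τ^j with a_0 = 1 satisfying the growth condition of k (|a_j| ≤ C^{-j}(−j)! for some C > 0, all j ≤ 0). Then E is invertible in k and its inverse E^{-1} = Σ_{j ≤ 0} b_j τ^j also satisfies b_0 = 1 and the growth condition: there exists C' > 0 with |b_j| ≤ C'^{-j}(−j)! for all j ≤ 0. -/
/-!
Having no terms of negative index, `E` is the image of a power series `F` with constant term `1`,
so `E⁻¹` is the image of `F⁻¹`, whose coefficients satisfy `b₀ = 1`,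
`bₙ = -∑_{m<n} a_{n-m} b_m`. If `‖aₙ‖ ≤ Cⁿ n!`, strong induction gives `‖bₙ‖ ≤ (2C)ⁿ n!`:
as `(n-m)! m! ≤ n!`, the `m`-th term is at most `Cⁿ 2ᵐ n!`, and `∑_{m<n} 2ᵐ < 2ⁿ`.
-/

/- Model: `ℂ[[τ⁻¹]][τ]` is the field `LaurentSeries ℂ` in the variable `t = τ⁻¹`;
`a.coeff i` is the coefficient `a_j` of `τ^j` with `j = -i`.  A series
`E = Σ_{j ≤ 0} a_j τ^j` has `E.coeff i = 0` for `i < 0` and constant term `E.coeff 0`. -/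

def kSet : Set (LaurentSeries ℂ) :=
  {a | ∃ C : ℝ, 0 < C ∧ ∀ i : ℕ, ‖a.coeff (i : ℤ)‖ ≤ C ^ i * (i.factorial : ℝ)}

open PowerSeries Finset
open scoped LaurentSeries

namespace PowerSeries

theorem coeff_inv_eq_neg_sum {k : Type*} [Field k] {F : k⟦X⟧} (hF : constantCoeff F = 1)
    {n : ℕ} (hn : n ≠ 0) :
    coeff n F⁻¹ = -∑ m ∈ range n, coeff (n - m) F * coeff m F⁻¹ := by
  rw [coeff_inv, if_neg hn, hF, inv_one, neg_one_mul, ← Nat.sum_antidiagonal_swap]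
  simp only [Prod.snd_swap, Prod.fst_swap]
  rw [Nat.sum_antidiagonal_eq_sum_range_succ_mk, sum_range_succ, if_neg (lt_irrefl n), add_zero]
  exact congrArg _ (sum_congr rfl fun m hm => if_pos (mem_range.mp hm))

theorem norm_coeff_inv_le {𝕜 : Type*} [NormedField 𝕜] {F : 𝕜⟦X⟧} (hF : constantCoeff F = 1)
    {C : ℝ} (hC : 0 ≤ C) (hbound : ∀ n, ‖coeff n F‖ ≤ C ^ n * n.factorial) (n : ℕ) :
    ‖coeff n F⁻¹‖ ≤ (2 * C) ^ n * n.factorial := by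
  induction n using Nat.strong_induction_on with
  | _ n ih =>
  rcases eq_or_ne n 0 with rfl | hn
  · simp [hF]
  have hterm : ∀ m ∈ range n,
      ‖coeff (n - m) F * coeff m F⁻¹‖ ≤ C ^ n * n.factorial * 2 ^ m := by
    intro m hm
    have hmn : m ≤ n := (mem_range.mp hm).le
    have hfact : ((n - m).factorial : ℝ) * m.factorial ≤ n.factorial := by
      exact_mod_cast Nat.le_of_dvd n.factorial_pos
        (mul_comm m.factorial _ ▸ Nat.factorial_mul_factorial_dvd_factorial hmn)
    calc ‖coeff (n - m) F * coeff m F⁻¹‖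
        ≤ (C ^ (n - m) * (n - m).factorial) * ((2 * C) ^ m * m.factorial) := by
          rw [norm_mul]
          exact mul_le_mul (hbound _) (ih m (mem_range.mp hm)) (norm_nonneg _) (by positivity)
      _ = C ^ (n - m + m) * 2 ^ m * ((n - m).factorial * m.factorial) := by ring
      _ ≤ C ^ n * n.factorial * 2 ^ m := by
          rw [Nat.sub_add_cancel hmn, mul_right_comm]
          gcongr
  have hgeom : ∑ m ∈ range n, (2 : ℝ) ^ m ≤ 2 ^ n := by
    rw [geom_sum_eq (by norm_num)]
    norm_num
  calc ‖coeff n F⁻¹‖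
      ≤ ∑ m ∈ range n, ‖coeff (n - m) F * coeff m F⁻¹‖ := by
        rw [coeff_inv_eq_neg_sum hF hn, norm_neg]
        exact norm_sum_le _ _
    _ ≤ ∑ m ∈ range n, C ^ n * n.factorial * 2 ^ m := sum_le_sum hterm
    _ ≤ C ^ n * n.factorial * 2 ^ n := by
        rw [← mul_sum]
        gcongr
    _ = (2 * C) ^ n * n.factorial := by ring

theorem coe_inv {k : Type*} [Field k] {F : k⟦X⟧} (hF : constantCoeff F ≠ 0) :
    ((F⁻¹ : k⟦X⟧) : k⸨X⸩) = (F : k⸨X⸩)⁻¹ := by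
  refine (inv_eq_of_mul_eq_one_right ?_).symm
  rw [← coe_mul, PowerSeries.mul_inv_cancel F hF, coe_one]

end PowerSeries

theorem LaurentSeries.coe_mk_coeff {R : Type*} [Semiring R] {E : R⸨X⸩}
    (h : ∀ i : ℤ, i < 0 → E.coeff i = 0) :
    ((PowerSeries.mk fun n : ℕ => E.coeff n : R⟦X⟧) : R⸨X⸩) = E := by
  ext i
  rw [coeff_coe]
  split_ifs with hi
  · exact (h i hi).symm
  · rw [coeff_mk, Int.natAbs_of_nonneg (not_lt.mp hi)]

/-- if `E = Σ_{j ≤ 0} a_j τ^j` has constant term `1` and satisfies the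
growth condition of `k`, then `E` is invertible in `k`, and its inverse again is of
the form `Σ_{j ≤ 0} b_j τ^j` with `b_0 = 1` and satisfies the growth condition. -/
theorem inv_of_unit_constant_term (E : LaurentSeries ℂ)
    (hord : ∀ i : ℤ, i < 0 → E.coeff i = 0)
    (hconst : E.coeff 0 = 1)
    (hE : E ∈ kSet) :
    E * E⁻¹ = 1 ∧ E⁻¹ ∈ kSet ∧
    (∀ i : ℤ, i < 0 → (E⁻¹).coeff i = 0) ∧ (E⁻¹).coeff 0 = 1 := by
  set F : ℂ⟦X⟧ := PowerSeries.mk fun n => E.coeff n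
  have hF : constantCoeff F = 1 := by
    rw [← coeff_zero_eq_constantCoeff_apply, coeff_mk]
    exact hconst
  have hinv : E⁻¹ = ((F⁻¹ : ℂ⟦X⟧) : ℂ⸨X⸩) := by
    rw [coe_inv (hF ▸ one_ne_zero), LaurentSeries.coe_mk_coeff hord]
  obtain ⟨C, hC, hbound⟩ := hE
  refine ⟨mul_inv_cancel₀ fun h => by simp [h] at hconst, ⟨2 * C, by positivity, fun n => ?_⟩,
    fun i hi => by rw [hinv, coeff_coe, if_pos hi], ?_⟩
  · rw [hinv, LaurentSeries.coeff_coe_powerSeries]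
    exact norm_coeff_inv_le hF hC.le (fun m => by rw [coeff_mk]; exact hbound m) n
  · rw [hinv, ← Nat.cast_zero, LaurentSeries.coeff_coe_powerSeries, coeff_zero_eq_constantCoeff_apply,
      constantCoeff_inv, hF, inv_one]
end

section
/- For a series p(ξ) = Σ_{j ≤ 0} p_j ξ^{j} of holomorphic functions homogeneous of degree j on an open cone, the Borel-type estimate sup_K |p_j| ≤ C_K^{-j}(−j)! for all j ≤ 0 is stable under the transposition formula: if ᵗp(x;ξ) = Σ_{α}((−1)^{|α|}/α!) ∂_ξ^α ∂_x^α p(x;−ξ) is computed degreewise (each homogeneous component of ᵗp is a finite sum of derivatives of components of p of higher degree), then in the single-variable polynomial model where p_j ∈ ℂ[x,ξ] with deg bounds fixed, the components of ᵗp satisfy estimates of the same type with a possibly larger constant. -/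
open MvPolynomial

/- Model: polynomials in `(x, ξ) ∈ ℂⁿ × ℂⁿ` are `MvPolynomial (Fin n ⊕ Fin n) ℂ`
with `x i = X (Sum.inl i)`, `ξ i = X (Sum.inr i)`; `K` is the closed polydisc of
radius `R`. -/

/-- Iterated partial derivative `∂_x^α`. -/
noncomputable def DX {R : Type} [CommRing R] (n : ℕ) (α : Fin n →₀ ℕ) :
    Module.End R (MvPolynomial (Fin n ⊕ Fin n) R) :=
  ((List.finRange n).map fun i =>
    ((pderiv (Sum.inl i : Fin n ⊕ Fin n)).toLinearMap) ^ (α i)).prod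

/-- Iterated partial derivative `∂_ξ^α`. -/
noncomputable def DXi {R : Type} [CommRing R] (n : ℕ) (α : Fin n →₀ ℕ) :
    Module.End R (MvPolynomial (Fin n ⊕ Fin n) R) :=
  ((List.finRange n).map fun i =>
    ((pderiv (Sum.inr i : Fin n ⊕ Fin n)).toLinearMap) ^ (α i)).prod

/-- The substitution `ξ ↦ -ξ`. -/
noncomputable def negXi (n : ℕ) :
    MvPolynomial (Fin n ⊕ Fin n) ℂ →ₐ[ℂ] MvPolynomial (Fin n ⊕ Fin n) ℂ :=
  aeval (Sum.elim (fun i => X (Sum.inl i)) (fun i => -X (Sum.inr i)))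

/-- The degree-`j` component of the transposition:
`(ᵗp)_j = Σ_α ((-1)^{|α|}/α!) ∂_ξ^α ∂_x^α p_{j+|α|}(x; -ξ)`. -/
noncomputable def transpComp (n : ℕ) (p : ℤ → MvPolynomial (Fin n ⊕ Fin n) ℂ) (j : ℤ) :
    MvPolynomial (Fin n ⊕ Fin n) ℂ :=
  ∑ᶠ α : Fin n →₀ ℕ,
    (((-1 : ℂ) ^ (α.sum fun _ k => k)) * (α.prod fun _ k => (k.factorial : ℂ))⁻¹) •
      DXi n α (DX n α (negXi n (p (j + (α.sum fun _ k => (k : ℤ))))))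

/-!
Only multi-indices `α ≤ (D, …, D)` contribute to `(ᵗp)_j`, since `∂_x^α` kills every polynomial
of degree at most `D` in each variable once some `αᵢ > D`, and the coefficients `(-1)^{|α|}/α!`
have modulus at most `1`. On the finite-dimensional space of such polynomials the sup norm over
the polydisc is a genuine norm (a polynomial vanishing on a box with infinite sides is zero), so
each of the finitely many operators `q ↦ ∂_ξ^α ∂_x^α q(x; -ξ)` is bounded for it. As
`j ↦ C^{-j} (-j)!` is antitone for `C ≥ 1`, every `p_{j+|α|}` obeys the bound of `p_j`, hence
`(ᵗp)_j` obeys it up to a fixed factor, which is absorbed into `C'` when `j < 0`; in degree `0`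
only `α = 0` contributes and `(ᵗp)_0 = p_0(x; -ξ)`.
-/

theorem LinearMap.exists_norm_le_mul_norm_of_injective {𝕜 M E F : Type*}
    [NontriviallyNormedField 𝕜] [CompleteSpace 𝕜] [AddCommGroup M] [Module 𝕜 M]
    [NormedAddCommGroup E] [NormedSpace 𝕜 E] [NormedAddCommGroup F] [NormedSpace 𝕜 F]
    {ι : M →ₗ[𝕜] E} (hι : Function.Injective ι) (V : Submodule 𝕜 M) [FiniteDimensional 𝕜 V]
    (T : M →ₗ[𝕜] F) :
    ∃ A, 0 ≤ A ∧ ∀ q ∈ V, ‖T q‖ ≤ A * ‖ι q‖ := by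
  let e : V ≃ₗ[𝕜] V.map ι := Submodule.equivMapOfInjective ι hι V
  let L : V.map ι →L[𝕜] F :=
    LinearMap.toContinuousLinearMap (T ∘ₗ V.subtype ∘ₗ e.symm.toLinearMap)
  refine ⟨‖L‖, norm_nonneg L, fun q hq => ?_⟩
  have hL : L (e ⟨q, hq⟩) = T q := by simp [L]
  calc ‖T q‖ = ‖L (e ⟨q, hq⟩)‖ := by rw [hL]
    _ ≤ ‖L‖ * ‖ι q‖ := L.le_opNorm _

theorem antitone_pow_toNat_mul_factorial {c : ℝ} (hc : 1 ≤ c) :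
    Antitone fun j : ℤ => c ^ (-j).toNat * ((-j).toNat.factorial : ℝ) := fun i j hij => by
  have hk : (-j).toNat ≤ (-i).toNat := by omega
  dsimp only
  gcongr

namespace Module.End

variable {R M : Type*} [Semiring R] [AddCommMonoid M] [Module R M]

theorem mapsTo_list_prod {l : List (Module.End R M)} {s : Set M}
    (hl : ∀ f ∈ l, Set.MapsTo f s s) : Set.MapsTo l.prod s s := by
  induction l with
  | nil => exact Set.mapsTo_id s
  | cons f l ih =>
    rw [List.prod_cons, Module.End.coe_mul]
    exact (hl f List.mem_cons_self).comp (ih fun g hg => hl g (List.mem_cons_of_mem f hg))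

theorem list_prod_apply_eq_zero {l : List (Module.End R M)} {s : Set M} {g : Module.End R M}
    (hl : ∀ f ∈ l, Set.MapsTo f s s) (hg : g ∈ l) (hgs : ∀ x ∈ s, g x = 0) {x : M}
    (hx : x ∈ s) : l.prod x = 0 := by
  induction l with
  | nil => simp at hg
  | cons f l ih =>
    have hl' : ∀ f ∈ l, Set.MapsTo f s s := fun g hg => hl g (List.mem_cons_of_mem f hg)
    rw [List.prod_cons, Module.End.mul_apply]
    rcases List.mem_cons.mp hg with rfl | hg
    · exact hgs _ (mapsTo_list_prod hl' hx)
    · rw [ih hl' hg, map_zero]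

end Module.End

namespace MvPolynomial

section Degree

variable {σ R : Type*} [CommSemiring R]

theorem mem_restrictDegree_iff_degreeOf_le {p : MvPolynomial σ R} {D : ℕ} :
    p ∈ restrictDegree σ R D ↔ ∀ i, degreeOf i p ≤ D := by
  simp only [mem_restrictDegree, degreeOf_le_iff]
  exact ⟨fun h i s hs => h s hs i, fun h s hs i => h i s hs⟩

theorem add_single_mem_support_of_mem_support_pderiv {w : σ} {f : MvPolynomial σ R}
    {s : σ →₀ ℕ} (hs : s ∈ (pderiv w f).support) : s + Finsupp.single w 1 ∈ f.support := by
  rw [mem_support_iff, coeff_pderiv] at hs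
  exact mem_support_iff.mpr (left_ne_zero_of_mul hs)

theorem degreeOf_pderiv_le (v w : σ) (f : MvPolynomial σ R) :
    degreeOf v (pderiv w f) ≤ degreeOf v f :=
  degreeOf_le_iff.mpr fun _ hs => le_trans (by simp)
    (monomial_le_degreeOf v (add_single_mem_support_of_mem_support_pderiv hs))

theorem degreeOf_pderiv_self_le {v : σ} {f : MvPolynomial σ R} {k : ℕ}
    (hf : degreeOf v f ≤ k + 1) : degreeOf v (pderiv v f) ≤ k := by
  refine degreeOf_le_iff.mpr fun s hs => ?_
  simpa using (monomial_le_degreeOf v (add_single_mem_support_of_mem_support_pderiv hs)).trans hf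

theorem pderiv_pow_apply_eq_zero {v : σ} {f : MvPolynomial σ R} {k : ℕ}
    (hf : degreeOf v f < k) : ((pderiv v).toLinearMap ^ k) f = 0 := by
  induction k generalizing f with
  | zero => omega
  | succ k ih =>
    rw [pow_succ, Module.End.mul_apply]
    rcases k with _ | k
    · exact pderiv_eq_zero_of_notMem_vars (by rw [mem_vars_iff_degreeOf_ne_zero]; omega)
    · exact ih (Nat.lt_succ_of_le (degreeOf_pderiv_self_le (by omega)))

theorem aeval_smul_X_monomial (c : σ → R) (s : σ →₀ ℕ) (a : R) :
    aeval (fun i => c i • (X i : MvPolynomial σ R)) (monomial s a) =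
      monomial s ((s.prod fun i k => c i ^ k) * a) := by
  rw [aeval_monomial, monomial_eq, algebraMap_eq, Finsupp.prod, Finsupp.prod, Finsupp.prod]
  simp only [smul_eq_C_mul, mul_pow, Finset.prod_mul_distrib, map_mul, map_prod, map_pow]
  ring

theorem coeff_aeval_smul_X (c : σ → R) (f : MvPolynomial σ R) (s : σ →₀ ℕ) :
    coeff s (aeval (fun i => c i • (X i : MvPolynomial σ R)) f) =
      (s.prod fun i k => c i ^ k) * coeff s f := by
  classical
  induction f using MvPolynomial.induction_on' with
  | add p q hp hq => rw [map_add, coeff_add, coeff_add, hp, hq, mul_add]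
  | monomial u a =>
    rw [aeval_smul_X_monomial, coeff_monomial, coeff_monomial]
    split_ifs with h
    · rw [h]
    · rw [mul_zero]

theorem degreeOf_aeval_smul_X_le (c : σ → R) (f : MvPolynomial σ R) (v : σ) :
    degreeOf v (aeval (fun i => c i • (X i : MvPolynomial σ R)) f) ≤ degreeOf v f := by
  refine degreeOf_le_iff.mpr fun s hs => monomial_le_degreeOf v ?_
  rw [mem_support_iff, coeff_aeval_smul_X] at hs
  exact mem_support_iff.mpr (right_ne_zero_of_mul hs)

end Degree

section ClosedBall

variable {𝕜 σ : Type*} [NontriviallyNormedField 𝕜] [Fintype σ]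

noncomputable def toContinuousMapOn (s : Set (σ → 𝕜)) : MvPolynomial σ 𝕜 →ₗ[𝕜] C(s, 𝕜) where
  toFun q := ⟨fun z => eval (z : σ → 𝕜) q, (continuous_eval q).comp continuous_subtype_val⟩
  map_add' _ _ := by ext; simp
  map_smul' _ _ := by ext; simp

theorem toContinuousMapOn_closedBall_injective {R : ℝ} (hR : 0 < R) :
    Function.Injective (toContinuousMapOn (Metric.closedBall (0 : σ → 𝕜) R)) := by
  rw [← LinearMap.ker_eq_bot, LinearMap.ker_eq_bot']
  intro q hq
  refine funext_set (fun _ => Metric.closedBall 0 R)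
    (fun _ => infinite_of_mem_nhds 0 (Metric.closedBall_mem_nhds 0 hR)) fun z hz => ?_
  have := DFunLike.congr_fun hq ⟨z, by rwa [← closedBall_pi _ hR.le] at hz⟩
  simpa [toContinuousMapOn] using this

theorem exists_bound_on_closedBall [ProperSpace 𝕜] {R : ℝ} (hR : 0 < R)
    (V : Submodule 𝕜 (MvPolynomial σ 𝕜)) [FiniteDimensional 𝕜 V]
    (T : MvPolynomial σ 𝕜 →ₗ[𝕜] MvPolynomial σ 𝕜) :
    ∃ A, 0 ≤ A ∧ ∀ q ∈ V, ∀ B, (∀ z ∈ Metric.closedBall 0 R, ‖eval z q‖ ≤ B) →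
      ∀ z ∈ Metric.closedBall 0 R, ‖eval z (T q)‖ ≤ A * B := by
  set K := Metric.closedBall (0 : σ → 𝕜) R
  have : CompactSpace K := isCompact_iff_compactSpace.mp (isCompact_closedBall 0 R)
  obtain ⟨A, hA0, hA⟩ := LinearMap.exists_norm_le_mul_norm_of_injective
    (toContinuousMapOn_closedBall_injective hR) V (toContinuousMapOn K ∘ₗ T)
  refine ⟨A, hA0, fun q hq B hB z hz => ?_⟩
  have hB0 : 0 ≤ B := (norm_nonneg _).trans (hB 0 (Metric.mem_closedBall_self hR.le))
  calc ‖eval z (T q)‖ = ‖toContinuousMapOn K (T q) ⟨z, hz⟩‖ := rfl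
    _ ≤ ‖toContinuousMapOn K (T q)‖ := ContinuousMap.norm_coe_le_norm _ _
    _ ≤ A * ‖toContinuousMapOn K q‖ := hA q hq
    _ ≤ A * B := mul_le_mul_of_nonneg_left
        ((ContinuousMap.norm_le _ hB0).mpr fun w => hB w w.2) hA0

end ClosedBall

end MvPolynomial

section Transposition

variable {n : ℕ}

theorem DX_zero {R : Type} [CommRing R] : DX (R := R) n 0 = 1 :=
  List.prod_eq_one fun _ hf => by obtain ⟨i, -, rfl⟩ := List.mem_map.mp hf; simp

theorem DXi_zero {R : Type} [CommRing R] : DXi (R := R) n 0 = 1 :=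
  List.prod_eq_one fun _ hf => by obtain ⟨i, -, rfl⟩ := List.mem_map.mp hf; simp

theorem DX_apply_eq_zero {R : Type} [CommRing R] {α : Fin n →₀ ℕ}
    {f : MvPolynomial (Fin n ⊕ Fin n) R} {i : Fin n} (hf : degreeOf (Sum.inl i) f < α i) :
    DX n α f = 0 := by
  refine Module.End.list_prod_apply_eq_zero
    (s := {g | degreeOf (Sum.inl i) g ≤ degreeOf (Sum.inl i) f}) ?_
    (List.mem_map_of_mem (List.mem_finRange i)) ?_ (le_refl (degreeOf (Sum.inl i) f))
  · intro g hg
    obtain ⟨i', -, rfl⟩ := List.mem_map.mp hg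
    rw [Module.End.coe_pow]
    exact Set.MapsTo.iterate (fun g hg => (degreeOf_pderiv_le _ _ g).trans hg) _
  · exact fun g hg => pderiv_pow_apply_eq_zero (hg.trans_lt hf)

theorem negXi_eq_aeval_smul_X :
    negXi n = aeval (fun v => Sum.elim (fun _ => (1 : ℂ)) (fun _ => -1) v • X v) := by
  rw [negXi]; congr 1; funext v; cases v <;> simp

theorem degreeOf_negXi_le (f : MvPolynomial (Fin n ⊕ Fin n) ℂ) (v : Fin n ⊕ Fin n) :
    degreeOf v (negXi n f) ≤ degreeOf v f := by
  rw [negXi_eq_aeval_smul_X]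
  exact degreeOf_aeval_smul_X_le _ f v

theorem eval_negXi (z : Fin n ⊕ Fin n → ℂ) (f : MvPolynomial (Fin n ⊕ Fin n) ℂ) :
    eval z (negXi n f) = eval (Sum.elim (fun i => z (Sum.inl i)) fun i => -z (Sum.inr i)) f := by
  induction f using MvPolynomial.induction_on with
  | C a => simp [negXi]
  | add f g hf hg => simp only [map_add, hf, hg]
  | mul_X f v hf => rw [map_mul, map_mul, hf]; cases v <;> simp [negXi]

theorem norm_transpComp_coeff_le_one (α : Fin n →₀ ℕ) :
    ‖((-1 : ℂ) ^ (α.sum fun _ k => k)) * (α.prod fun _ k => (k.factorial : ℂ))⁻¹‖ ≤ 1 := by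
  rw [norm_mul, norm_pow, norm_neg, norm_one, one_pow, one_mul, norm_inv, Finsupp.prod,
    norm_prod]
  refine inv_le_one_of_one_le₀ (Finset.one_le_prod fun i _ => ?_)
  rw [Complex.norm_natCast]
  exact_mod_cast Nat.factorial_pos _

theorem transpComp_eq_sum {D : ℕ} {p : ℤ → MvPolynomial (Fin n ⊕ Fin n) ℂ}
    (hdeg : ∀ j i, degreeOf i (p j) ≤ D) (j : ℤ) :
    transpComp n p j = ∑ α ∈ Finset.Iic (Finsupp.equivFunOnFinite.symm fun _ => D),
      (((-1 : ℂ) ^ (α.sum fun _ k => k)) * (α.prod fun _ k => (k.factorial : ℂ))⁻¹) •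
        DXi n α (DX n α (negXi n (p (j + (α.sum fun _ k => (k : ℤ)))))) := by
  refine finsum_eq_sum_of_support_subset _ fun α hα => ?_
  rw [Finset.coe_Iic, Set.mem_Iic]
  by_contra h
  obtain ⟨i, hi⟩ : ∃ i, D < α i := by simpa [Finsupp.le_def] using h
  apply hα
  beta_reduce
  rw [DX_apply_eq_zero ((degreeOf_negXi_le _ _).trans_lt ((hdeg _ _).trans_lt hi)), map_zero,
    smul_zero]

theorem transpComp_zero {p : ℤ → MvPolynomial (Fin n ⊕ Fin n) ℂ}
    (hvanish : ∀ j, 0 < j → p j = 0) : transpComp n p 0 = negXi n (p 0) := by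
  rw [transpComp, finsum_eq_single _ 0 fun α hα => ?_]
  · simp [DX_zero, DXi_zero]
  · rw [hvanish _ ?_, map_zero, map_zero, map_zero, smul_zero]
    rw [zero_add]
    refine Finset.sum_pos (fun i hi => ?_) (Finsupp.support_nonempty_iff.mpr hα)
    exact Int.natCast_pos.mpr (Nat.pos_of_ne_zero (Finsupp.mem_support_iff.mp hi))

theorem exists_transpComp_bound (D : ℕ) {R : ℝ} (hR : 0 < R) :
    ∃ A, 0 ≤ A ∧ ∀ p : ℤ → MvPolynomial (Fin n ⊕ Fin n) ℂ, (∀ j i, degreeOf i (p j) ≤ D) →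
      ∀ B : ℤ → ℝ, Antitone B → (∀ j, ∀ z ∈ Metric.closedBall 0 R, ‖eval z (p j)‖ ≤ B j) →
        ∀ j, ∀ z ∈ Metric.closedBall 0 R, ‖eval z (transpComp n p j)‖ ≤ A * B j := by
  set S := Finset.Iic (Finsupp.equivFunOnFinite.symm fun (_ : Fin n) => D)
  choose A hA0 hA using fun α : Fin n →₀ ℕ => exists_bound_on_closedBall hR
    (restrictDegree _ ℂ D) (DXi n α ∘ₗ DX n α ∘ₗ (negXi n).toLinearMap)
  refine ⟨∑ α ∈ S, A α, Finset.sum_nonneg fun α _ => hA0 α, fun p hdeg B hB hp j z hz => ?_⟩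
  rw [transpComp_eq_sum hdeg, map_sum, Finset.sum_mul]
  refine (norm_sum_le _ _).trans (Finset.sum_le_sum fun α _ => ?_)
  have hshift : B (j + α.sum fun _ k => (k : ℤ)) ≤ B j :=
    hB (le_add_of_nonneg_right (Finset.sum_nonneg fun _ _ => Nat.cast_nonneg _))
  rw [smul_eval, norm_mul]
  calc _ ≤ 1 * (A α * B (j + α.sum fun _ k => (k : ℤ))) :=
        mul_le_mul (norm_transpComp_coeff_le_one α)
          (hA α _ (mem_restrictDegree_iff_degreeOf_le.mpr (hdeg _)) _ (hp _) z hz)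
          (norm_nonneg _) zero_le_one
    _ ≤ A α * B j := by rw [one_mul]; exact mul_le_mul_of_nonneg_left hshift (hA0 α)

end Transposition

/-- the Borel-type estimates `sup_K |p_j| ≤ C^{-j}(-j)!` (`j ≤ 0`) on
the homogeneous components, in the polynomial model with degrees bounded by `D` in
each variable, are stable under the transposition formula: the components of `ᵗp`
satisfy estimates of the same type with a possibly larger constant `C'`
(depending on `C`, `D`, `n`, `K`). -/
theorem transposition_estimate (n D : ℕ) (R C : ℝ) (hR : 0 < R) (hC : 0 < C)
    (p : ℤ → MvPolynomial (Fin n ⊕ Fin n) ℂ)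
    (hvanish : ∀ j : ℤ, 0 < j → p j = 0)
    (hdeg : ∀ (j : ℤ) (i : Fin n ⊕ Fin n), degreeOf i (p j) ≤ D)
    (hbound : ∀ j : ℤ, j ≤ 0 → ∀ z : (Fin n ⊕ Fin n) → ℂ, (∀ i, ‖z i‖ ≤ R) →
      ‖eval z (p j)‖ ≤ C ^ (-j).toNat * ((-j).toNat.factorial : ℝ)) :
    ∃ C' : ℝ, 0 < C' ∧ ∀ j : ℤ, j ≤ 0 → ∀ z : (Fin n ⊕ Fin n) → ℂ, (∀ i, ‖z i‖ ≤ R) →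
      ‖eval z (transpComp n p j)‖ ≤ C' ^ (-j).toNat * ((-j).toNat.factorial : ℝ) := by
  obtain ⟨A, hA0, hA⟩ := exists_transpComp_bound (n := n) D hR
  have hball (z : Fin n ⊕ Fin n → ℂ) : z ∈ Metric.closedBall 0 R ↔ ∀ i, ‖z i‖ ≤ R :=
    mem_closedBall_zero_iff.trans (pi_norm_le_iff_of_nonneg hR.le)
  set C₁ := max C 1
  have hp (j : ℤ) (z) (hz : z ∈ Metric.closedBall 0 R) :
      ‖eval z (p j)‖ ≤ C₁ ^ (-j).toNat * ((-j).toNat.factorial : ℝ) := by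
    rcases le_or_gt j 0 with hj | hj
    · exact (hbound j hj z ((hball z).mp hz)).trans (by gcongr; exact le_max_left C 1)
    · rw [hvanish j hj, map_zero, norm_zero]; positivity
  refine ⟨max A 1 * C₁, by positivity, fun j hj z hz => ?_⟩
  rcases hj.lt_or_eq with hj | rfl
  · have hk : (-j).toNat ≠ 0 := by omega
    calc _ ≤ A * (C₁ ^ (-j).toNat * ((-j).toNat.factorial : ℝ)) :=
          hA p hdeg _ (antitone_pow_toNat_mul_factorial (le_max_right C 1)) hp j z
            ((hball z).mpr hz)
      _ ≤ max A 1 ^ (-j).toNat * (C₁ ^ (-j).toNat * ((-j).toNat.factorial : ℝ)) := by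
          gcongr
          exact (le_max_left A 1).trans (le_self_pow₀ (le_max_right A 1) hk)
      _ = _ := by rw [mul_pow, mul_assoc]
  · rw [transpComp_zero hvanish, eval_negXi]
    simpa using hbound 0 le_rfl _ fun i => by cases i <;> simp [hz]
end
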